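/- arXiv:1211.0152 — 2 statements merged into one kernel-verified Lean document; each statement's English description precedes it below -/
import Mathlib

section
/- Let F be a probability measure on ℝ with mean μ and central moments μ_k = E[(X−μ)^k]. For r ≥ 1, the first von Mises derivative (influence function) of the functional F ↦ μ_r(F) at the point x₁ is μ_{r·1}(x₁) = h₁^r − μ_r − r·h₁·μ_{r−1}, where h₁ = x₁ − μ. That is, with G_ε = (1−ε)F + εδ_{x₁}, one has d/dε μ_r(G_ε)|_{ε=0⁺} = (x₁−μ)^r − μ_r − r(x₁−μ)μ_{r−1}. -/
open MeasureTheory Filter Topology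

/-- The mean of a measure on `ℝ`. -/
noncomputable def m1 (G : MeasureTheory.Measure ℝ) : ℝ := ∫ x, x ∂G

/-- The `k`-th central moment of a measure on `ℝ` about its own mean. -/
noncomputable def cm (G : MeasureTheory.Measure ℝ) (k : ℕ) : ℝ :=
  ∫ x, (x - m1 G) ^ k ∂G

/-- The contaminated measure `(1-ε)F + ε δ_y`. -/
noncomputable def mix (F : MeasureTheory.Measure ℝ) (y : ℝ) (ε : ℝ) :
    MeasureTheory.Measure ℝ :=
  ENNReal.ofReal (1 - ε) • F + ENNReal.ofReal ε • MeasureTheory.Measure.dirac y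

open Finset

/-! The mean of `(1 - ε)F + εδ_{x₁}` is `μ + εh₁`, so its `r`-th central moment is
`(1 - ε) ∫ (x - μ - εh₁)^r dF + ε ((1 - ε)h₁)^r`. Expanding the integral binomially makes this a
polynomial in `ε`, whose derivative at `0` is read off from the constant and linear terms. -/

lemma integral_mix (F : Measure ℝ) (y : ℝ) {ε : ℝ} (hε₀ : 0 ≤ ε) (hε₁ : ε ≤ 1) {f : ℝ → ℝ}
    (hf : Integrable f F) :
    ∫ x, f x ∂(mix F y ε) = (1 - ε) * ∫ x, f x ∂F + ε * f y := by
  have hdirac : Integrable f (Measure.dirac y) := integrable_dirac enorm_lt_top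
  rw [mix, integral_add_measure (hf.smul_measure ENNReal.ofReal_ne_top)
      (hdirac.smul_measure ENNReal.ofReal_ne_top), integral_smul_measure, integral_smul_measure,
    integral_dirac, ENNReal.toReal_ofReal (by linarith), ENNReal.toReal_ofReal hε₀, smul_eq_mul,
    smul_eq_mul]

lemma integrable_sub_pow_of_integrable_pow {F : Measure ℝ} {r : ℕ}
    (hint : ∀ k ≤ r, Integrable (fun x : ℝ => x ^ k) F) (c : ℝ) {j : ℕ} (hj : j ≤ r) :
    Integrable (fun x : ℝ => (x - c) ^ j) F := by
  have hexpand : (fun x : ℝ => (x - c) ^ j)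
      = fun x => ∑ i ∈ range (j + 1), x ^ i * ((-c) ^ (j - i) * (j.choose i : ℝ)) := by
    funext x
    rw [sub_eq_add_neg, add_pow]
    exact sum_congr rfl fun i _ => by ring
  rw [hexpand]
  exact integrable_finsetSum _ fun i hi =>
    (hint i ((Nat.lt_succ_iff.mp (mem_range.mp hi)).trans hj)).mul_const _

lemma integral_sub_sub_pow {F : Measure ℝ} {r : ℕ}
    (hint : ∀ k ≤ r, Integrable (fun x : ℝ => x ^ k) F) (c t : ℝ) :
    ∫ x, (x - c - t) ^ r ∂F
      = ∑ i ∈ range (r + 1), ((-1) ^ i * r.choose i * ∫ x, (x - c) ^ (r - i) ∂F) * t ^ i := by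
  have hexpand : ∀ x : ℝ, (x - c - t) ^ r
      = ∑ i ∈ range (r + 1), (x - c) ^ (r - i) * ((-1) ^ i * r.choose i * t ^ i) := by
    intro x
    rw [show x - c - t = -t + (x - c) by ring, add_pow]
    exact sum_congr rfl fun i _ => by rw [neg_pow]; ring
  simp_rw [hexpand]
  rw [integral_finsetSum _ fun i hi => (integrable_sub_pow_of_integrable_pow hint c
    (Nat.sub_le r i)).mul_const _]
  exact sum_congr rfl fun i _ => by rw [integral_mul_const]; ring

lemma hasDerivAt_sum_mul_pow_zero (b : ℕ → ℝ) {n : ℕ} (hn : 2 ≤ n) :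
    HasDerivAt (fun t : ℝ => ∑ i ∈ range n, b i * t ^ i) (b 1) 0 := by
  have hterm : ∀ i ∈ range n,
      HasDerivAt (fun t : ℝ => b i * t ^ i) (b i * (i * (0 : ℝ) ^ (i - 1))) 0 :=
    fun i _ => (hasDerivAt_pow i 0).const_mul (b i)
  refine (HasDerivAt.fun_sum hterm).congr_deriv ?_
  rw [sum_eq_single 1 (fun i _ hi => by rcases i with _ | _ | i <;> simp_all)
    (fun hmem => absurd (mem_range.mpr (by omega)) hmem)]
  simp

lemma hasDerivAt_integral_sub_sub_pow_zero {F : Measure ℝ} {r : ℕ} (hr : 1 ≤ r)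
    (hint : ∀ k ≤ r, Integrable (fun x : ℝ => x ^ k) F) (c : ℝ) :
    HasDerivAt (fun t => ∫ x, (x - c - t) ^ r ∂F) (-(r * ∫ x, (x - c) ^ (r - 1) ∂F)) 0 := by
  simp_rw [integral_sub_sub_pow hint c]
  convert hasDerivAt_sum_mul_pow_zero _ (show 2 ≤ r + 1 by omega) using 1
  simp

lemma m1_mix {F : Measure ℝ} (hint : Integrable (fun x : ℝ => x) F) (y : ℝ) {ε : ℝ}
    (hε₀ : 0 ≤ ε) (hε₁ : ε ≤ 1) :
    m1 (mix F y ε) = m1 F + ε * (y - m1 F) := by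
  rw [m1, integral_mix F y hε₀ hε₁ hint, m1]
  ring

lemma cm_mix {F : Measure ℝ} {r : ℕ} (hr : 1 ≤ r)
    (hint : ∀ k ≤ r, Integrable (fun x : ℝ => x ^ k) F) (y : ℝ) {ε : ℝ}
    (hε₀ : 0 ≤ ε) (hε₁ : ε ≤ 1) :
    cm (mix F y ε) r = (1 - ε) * ∫ x, (x - m1 F - ε * (y - m1 F)) ^ r ∂F
      + ε * ((1 - ε) * (y - m1 F)) ^ r := by
  have hmean := m1_mix (by simpa using hint 1 hr) y hε₀ hε₁
  rw [cm, hmean, integral_mix F y hε₀ hε₁ (integrable_sub_pow_of_integrable_pow hint _ le_rfl)]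
  simp only [sub_add_eq_sub_sub]
  rw [show y - m1 F - ε * (y - m1 F) = (1 - ε) * (y - m1 F) by ring]

theorem influence_function_of_central_moment_general
    (F : MeasureTheory.Measure ℝ)
    (r : ℕ) (hr : 1 ≤ r)
    (hint : ∀ k ≤ r, Integrable (fun x : ℝ => x ^ k) F) (x₁ : ℝ) :
    Tendsto (fun ε : ℝ => (cm (mix F x₁ ε) r - cm F r) / ε)
      (𝓝[>] 0)
      (𝓝 ((x₁ - m1 F) ^ r - cm F r - r * (x₁ - m1 F) * cm F (r - 1))) := by
  set h := x₁ - m1 F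
  set φ : ℝ → ℝ := fun ε =>
    (1 - ε) * ∫ x, (x - m1 F - ε * h) ^ r ∂F + ε * ((1 - ε) * h) ^ r
  have hφ0 : φ 0 = cm F r := by simp [φ, cm]
  have hφ : HasDerivAt φ (h ^ r - cm F r - r * h * cm F (r - 1)) 0 := by
    have hmoment : HasDerivAt (fun ε => ∫ x, (x - m1 F - ε * h) ^ r ∂F)
        (-(r * cm F (r - 1)) * h) 0 :=
      (hasDerivAt_integral_sub_sub_pow_zero hr hint (m1 F)).comp_of_eq 0
        (hasDerivAt_mul_const h) (zero_mul h).symm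
    have hweight : HasDerivAt (fun ε : ℝ => 1 - ε) (-1) 0 := by
      simpa using (hasDerivAt_id' (0 : ℝ)).const_sub 1
    refine ((hweight.fun_mul hmoment).fun_add
      ((hasDerivAt_id' 0).fun_mul ((hweight.mul_const h).fun_pow r))).congr_deriv ?_
    simp [cm]
    ring
  refine hφ.tendsto_slope_zero_right.congr' ?_
  filter_upwards [Ioo_mem_nhdsGT (zero_lt_one' ℝ)] with ε ⟨hε₀, hε₁⟩
  rw [cm_mix hr hint x₁ hε₀.le hε₁.le, zero_add, smul_eq_mul, inv_mul_eq_div, hφ0]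

/-- The influence function of the `r`-th central moment functional:
`d/dε μ_r((1−ε)F + εδ_{x₁}) |_{ε=0⁺} = h₁^r − μ_r − r h₁ μ_{r−1}` with `h₁ = x₁ − μ`. -/
theorem influence_function_of_central_moment
    (F : MeasureTheory.Measure ℝ) [IsProbabilityMeasure F]
    (r : ℕ) (hr : 1 ≤ r)
    (hint : ∀ k ≤ r, Integrable (fun x : ℝ => x ^ k) F) (x₁ : ℝ) :
    Tendsto (fun ε : ℝ => (cm (mix F x₁ ε) r - cm F r) / ε)
      (𝓝[>] 0)
      (𝓝 ((x₁ - m1 F) ^ r - cm F r - r * (x₁ - m1 F) * cm F (r - 1))) :=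
  influence_function_of_central_moment_general F r hr hint x₁
end

section
/- For T(F) = μ_r(F), the cube of the influence function integrates to [1³]_T = μ_{3r} − 3r μ_{2r+1} μ_{r−1} − 3 μ_{2r} μ_r + 3r² μ_{r+2} μ_{r−1}² + 6r μ_{r+1} μ_r μ_{r−1} + 2 μ_r³ − 3r² μ_r μ_{r−1}² μ₂ − r³ μ_{r−1}³ μ₃. -/
/-!
Writing `h = x - μ`, the cube of the influence function `h ^ r - μ_r - r h μ_{r-1}` expands into
a linear combination of ten powers of `h`, whose exponents are at most `3 r`. Integrating term
by term turns each power `h ^ k` into `μ_k`, and `μ_0 = 1`, `μ_1 = 0` collapse the result to the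
stated formula.
-/

open MeasureTheory

section CentralMoments

variable {F : Measure ℝ}

theorem integrable_sub_pow {n : ℕ} (hint : ∀ k ≤ n, Integrable (fun x : ℝ => x ^ k) F)
    (c : ℝ) {k : ℕ} (hk : k ≤ n) : Integrable (fun x : ℝ => (x - c) ^ k) F := by
  have hexpand : (fun x : ℝ => (x - c) ^ k)
      = fun x => ∑ j ∈ Finset.range (k + 1), x ^ j * ((-c) ^ (k - j) * k.choose j) := by
    funext x
    rw [sub_eq_add_neg, add_pow]
    simp only [mul_assoc]
  rw [hexpand]
  exact integrable_finsetSum _ fun j hj =>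
    (hint j ((Nat.lt_succ_iff.mp (Finset.mem_range.mp hj)).trans hk)).mul_const _

theorem integral_sum_mul_pow_sub_m1 {ι : Type*} (s : Finset ι) (c : ι → ℝ) (e : ι → ℕ)
    (he : ∀ i ∈ s, Integrable (fun x : ℝ => (x - m1 F) ^ e i) F) :
    ∫ x, ∑ i ∈ s, c i * (x - m1 F) ^ e i ∂F = ∑ i ∈ s, c i * cm F (e i) := by
  rw [integral_finsetSum s fun i hi => (he i hi).const_mul (c i)]
  exact Finset.sum_congr rfl fun i _ => integral_const_mul (c i) _

variable [IsProbabilityMeasure F]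

theorem cm_zero : cm F 0 = 1 := by
  simp [cm]

/-- This holds even when `F` has no mean, since then `m1 F` and `∫ x, x ∂F` are both `0`. -/
theorem cm_one : cm F 1 = 0 := by
  simp only [cm, pow_one]
  by_cases hx : Integrable (fun x : ℝ => x) F
  · rw [integral_sub hx (integrable_const _), integral_const]
    simp [m1]
  · simp [m1, integral_undef hx]

end CentralMoments

def influenceCubeCoeff (r : ℕ) (a b : ℝ) : Fin 10 → ℝ :=
  ![1, -(3 * r * b), -(3 * a), 3 * r ^ 2 * b ^ 2, 6 * r * a * b, 3 * a ^ 2, -(3 * r * a ^ 2 * b),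
    -(3 * r ^ 2 * a * b ^ 2), -(r ^ 3 * b ^ 3), -(a ^ 3)]

def influenceCubeExp (r : ℕ) : Fin 10 → ℕ :=
  ![3 * r, 2 * r + 1, 2 * r, r + 2, r + 1, r, 1, 2, 3, 0]

theorem influenceCubeExp_le {r : ℕ} (hr : 1 ≤ r) (i : Fin 10) : influenceCubeExp r i ≤ 3 * r := by
  fin_cases i <;> simp [influenceCubeExp] <;> omega

theorem influence_cube_eq_sum (r : ℕ) (h a b : ℝ) :
    (h ^ r - a - r * h * b) ^ 3
      = ∑ i, influenceCubeCoeff r a b i * h ^ influenceCubeExp r i := by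
  simp only [influenceCubeCoeff, influenceCubeExp, Fin.sum_univ_succ, Fin.sum_univ_zero,
    Matrix.cons_val_zero, Matrix.cons_val_succ]
  ring

/-- For `T(F) = μ_r(F)`, the cube of the influence function integrates to
`[1³]_T = μ_{3r} − 3r μ_{2r+1} μ_{r−1} − 3 μ_{2r} μ_r + 3r² μ_{r+2} μ_{r−1}²
  + 6r μ_{r+1} μ_r μ_{r−1} + 2 μ_r³ − 3r² μ_r μ_{r−1}² μ₂ − r³ μ_{r−1}³ μ₃`. -/
theorem bracket_one_cubed_of_central_moment
    (F : MeasureTheory.Measure ℝ) [IsProbabilityMeasure F]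
    (r : ℕ) (hr : 1 ≤ r)
    (hint : ∀ k ≤ 3 * r, Integrable (fun x : ℝ => x ^ k) F) :
    ∫ x, ((x - m1 F) ^ r - cm F r - r * (x - m1 F) * cm F (r - 1)) ^ 3 ∂F =
      cm F (3 * r) - 3 * r * cm F (2 * r + 1) * cm F (r - 1) - 3 * cm F (2 * r) * cm F r
        + 3 * r ^ 2 * cm F (r + 2) * cm F (r - 1) ^ 2
        + 6 * r * cm F (r + 1) * cm F r * cm F (r - 1)
        + 2 * cm F r ^ 3 - 3 * r ^ 2 * cm F r * cm F (r - 1) ^ 2 * cm F 2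
        - r ^ 3 * cm F (r - 1) ^ 3 * cm F 3 := by
  simp_rw [influence_cube_eq_sum]
  rw [integral_sum_mul_pow_sub_m1 _ _ _ fun i _ =>
    integrable_sub_pow hint _ (influenceCubeExp_le hr i)]
  simp only [influenceCubeCoeff, influenceCubeExp, Fin.sum_univ_succ, Fin.sum_univ_zero,
    Matrix.cons_val_zero, Matrix.cons_val_succ, cm_zero, cm_one]
  ring
end
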